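/- Let p ≥ 1, let x, x′ ∈ ℝ^d with x′ = x + δx and (∑_{i=1}^d |δx_i|^p)^{1/p} ≤ ε, and let S_j, S_u ⊆ {1, …, d} each have size n. Define a_j = ∑_{i∈S_j} x_i, a_u = ∑_{i∈S_u} x_i, and set β = a_j − a_u. If β > 0 and ε < β n^{1/p} / (2n) (equivalently 2 n^{1−1/p} ε < β), then the perturbed activations a′_j = ∑_{i∈S_j} x′_i and a′_u = ∑_{i∈S_u} x′_i satisfy a′_j > a′_u; that is, the pairwise order of the two Kenyon cell activations is preserved. -/

import Mathlib

/-! By Hölder's inequality a sum of `n` coordinates of the perturbation has absolute value at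
most `n ^ (1 - 1/p) * ε`, so perturbing moves the gap `a_j - a_u = β` by at most
`2 * n ^ (1 - 1/p) * ε`, which the bound on `ε` makes smaller than `β`. -/

open Real Finset

theorem abs_sum_le_card_rpow_mul_rpow_sum_abs_rpow {ι : Type*} (s : Finset ι) {p : ℝ}
    (hp : 1 ≤ p) (f : ι → ℝ) :
    |∑ i ∈ s, f i| ≤ (#s : ℝ) ^ (1 - 1 / p) * (∑ i ∈ s, |f i| ^ p) ^ (1 / p) := by
  have holder := inner_le_weight_mul_Lp_of_nonneg s hp (fun _ ↦ 1) (fun i ↦ |f i|)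
    (fun _ ↦ zero_le_one) (fun i ↦ abs_nonneg (f i))
  simp only [one_mul, sum_const, nsmul_eq_mul, mul_one] at holder
  rw [one_div]
  exact (abs_sum_le_sum_abs f s).trans holder

theorem abs_sum_le_card_rpow_mul_of_rpow_sum_abs_rpow_le {ι : Type*} [Fintype ι]
    (s : Finset ι) {p ε : ℝ} (hp : 1 ≤ p) {f : ι → ℝ}
    (hf : (∑ i, |f i| ^ p) ^ (1 / p) ≤ ε) :
    |∑ i ∈ s, f i| ≤ (#s : ℝ) ^ (1 - 1 / p) * ε := by
  have restrict_le : (∑ i ∈ s, |f i| ^ p) ^ (1 / p) ≤ (∑ i, |f i| ^ p) ^ (1 / p) := by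
    gcongr
    exact subset_univ s
  calc |∑ i ∈ s, f i| ≤ (#s : ℝ) ^ (1 - 1 / p) * (∑ i ∈ s, |f i| ^ p) ^ (1 / p) :=
        abs_sum_le_card_rpow_mul_rpow_sum_abs_rpow s hp f
    _ ≤ (#s : ℝ) ^ (1 - 1 / p) * ε := by gcongr; exact restrict_le.trans hf

theorem two_mul_rpow_one_sub_mul_lt_of_lt_mul_rpow_div {n p ε β : ℝ} (hn : 0 < n)
    (h : ε < β * n ^ (1 / p) / (2 * n)) :
    2 * n ^ (1 - 1 / p) * ε < β := by
  have hroot : 0 < n ^ (1 / p) := rpow_pos_of_pos hn _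
  rw [lt_div_iff₀ (by positivity)] at h
  calc 2 * n ^ (1 - 1 / p) * ε = ε * (2 * n) / n ^ (1 / p) := by
        rw [rpow_sub hn, rpow_one]; ring
    _ < β * n ^ (1 / p) / n ^ (1 / p) := by gcongr
    _ = β := mul_div_cancel_right₀ β hroot.ne'

theorem kenyon_pairwise_order_preserved_general
    (p : ℝ) (hp : 1 ≤ p) (d n : ℕ) (hn : 0 < n) (ε : ℝ)
    (x x' δx : Fin d → ℝ) (hx' : x' = x + δx)
    (hδx : (∑ i, |δx i| ^ p) ^ (1 / p) ≤ ε)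
    (Sj Su : Finset (Fin d)) (hSj : Sj.card = n) (hSu : Su.card = n)
    (aj au aj' au' β : ℝ)
    (haj : aj = ∑ i ∈ Sj, x i) (hau : au = ∑ i ∈ Su, x i)
    (haj' : aj' = ∑ i ∈ Sj, x' i) (hau' : au' = ∑ i ∈ Su, x' i)
    (hβ : β = aj - au)
    (hε : ε < β * (n : ℝ) ^ (1 / p) / (2 * n)) :
    aj' > au' := by
  have hj := abs_sum_le_card_rpow_mul_of_rpow_sum_abs_rpow_le Sj hp hδx
  have hu := abs_sum_le_card_rpow_mul_of_rpow_sum_abs_rpow_le Su hp hδx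
  rw [hSj] at hj
  rw [hSu] at hu
  have hgap := two_mul_rpow_one_sub_mul_lt_of_lt_mul_rpow_div (by exact_mod_cast hn) hε
  have hsplit : aj' - au' = β + (∑ i ∈ Sj, δx i - ∑ i ∈ Su, δx i) := by
    simp only [haj', hau', hβ, haj, hau, hx', Pi.add_apply, sum_add_distrib]
    ring
  linarith [neg_abs_le (∑ i ∈ Sj, δx i), le_abs_self (∑ i ∈ Su, δx i)]

/-- Preservation of the pairwise order of two Kenyon cell activations under small ℓ^p
perturbations: with `β = a_j - a_u > 0` and `ε < β * n ^ (1/p) / (2 * n)`, the perturbed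
activations satisfy `a'_j > a'_u`. -/
theorem kenyon_pairwise_order_preserved
    (p : ℝ) (hp : 1 ≤ p) (d n : ℕ) (hn : 0 < n) (ε : ℝ)
    (x x' δx : Fin d → ℝ) (hx' : x' = x + δx)
    (hδx : (∑ i, |δx i| ^ p) ^ (1 / p) ≤ ε)
    (Sj Su : Finset (Fin d)) (hSj : Sj.card = n) (hSu : Su.card = n)
    (aj au aj' au' β : ℝ)
    (haj : aj = ∑ i ∈ Sj, x i) (hau : au = ∑ i ∈ Su, x i)
    (haj' : aj' = ∑ i ∈ Sj, x' i) (hau' : au' = ∑ i ∈ Su, x' i)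
    (hβ : β = aj - au) (hβpos : 0 < β)
    (hε : ε < β * (n : ℝ) ^ (1 / p) / (2 * n)) :
    aj' > au' :=
  kenyon_pairwise_order_preserved_general p hp d n hn ε x x' δx hx' hδx Sj Su hSj hSu aj au aj' au'
    β haj hau haj' hau' hβ hε
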